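/- Assume λ is strongly inaccessible. Then for every ordinal γ < λ and condition T ∈ Q, Player II has a winning strategy in the game G_γ(T, Q) of length γ in which at stage ξ Player I plays an open dense subset D_ξ of Q and Player II must play T_ξ ∈ D_ξ with T ≤_Q T_ξ and T_ζ ≤_Q T_ξ for all ζ < ξ; Player II wins if he always has a legal move. In particular Q is strategically γ-complete for every γ < λ. -/

import Mathlib

open Ordinal Set Cardinal

/-- A transfinite binary sequence: a length and values, zero beyond the length. -/
structure BSeq where
  len : Ordinal.{0}
  val : Ordinal.{0} → Bool
  val_eq_false : ∀ β, len ≤ β → val β = false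

namespace BSeq

/-- The empty sequence. -/
def nil : BSeq := ⟨0, fun _ => false, fun _ _ => rfl⟩

/-- Restriction `η↾β` of a sequence to length `β`. -/
noncomputable def restrict (η : BSeq) (β : Ordinal) : BSeq :=
  ⟨min η.len β, fun γ => if γ < β then η.val γ else false, by
    intro γ hγ
    rcases min_le_iff.mp hγ with h | h
    · by_cases hb : γ < β
      · simpa [hb] using η.val_eq_false γ h
      · simp [hb]
    · simp [not_lt.mpr h]⟩

/-- `ν ⊴ η` : `ν` is an initial segment of `η`. -/
def IsInitSeg (ν η : BSeq) : Prop :=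
  ν.len ≤ η.len ∧ ∀ β < ν.len, ν.val β = η.val β

/-- `ν ◁ η` : `ν` is a proper initial segment of `η`. -/
def IsStrictInitSeg (ν η : BSeq) : Prop :=
  ν.IsInitSeg η ∧ ν.len < η.len

/-- `η⌢⟨b⟩`, appending one bit. -/
noncomputable def snoc (η : BSeq) (b : Bool) : BSeq :=
  ⟨η.len + 1, fun β => if β = η.len then b else η.val β, by
    intro β hβ
    have h1 : η.len < β := by
      exact lt_of_lt_of_le (lt_add_one η.len) hβ
    try simp only []
    rw [if_neg (ne_of_gt h1)]
    exact η.val_eq_false β h1.le⟩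

end BSeq

/-- The level `T_{[β]} = T ∩ 2^β`. -/
def level (T : Set BSeq) (β : Ordinal) : Set BSeq := {η ∈ T | η.len = β}

/-- `T_{[<β]} = T ∩ 2^{<β}`. -/
def levelLT (T : Set BSeq) (β : Ordinal) : Set BSeq := {η ∈ T | η.len < β}

/-- `lim_δ(T) = {η ∈ 2^δ : ∀ β < δ, η↾β ∈ T}`. -/
def limAt (T : Set BSeq) (δ : Ordinal) : Set BSeq :=
  {η | η.len = δ ∧ ∀ β < δ, η.restrict β ∈ T}

/-- `T ⊆ 2^{<α}` is an `α`-tree. -/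
structure IsTree (α : Ordinal) (T : Set BSeq) : Prop where
  limit : Order.IsSuccLimit α
  len_lt : ∀ η ∈ T, η.len < α
  nil_mem : BSeq.nil ∈ T
  downClosed : ∀ ν η : BSeq, ν.IsStrictInitSeg η → η ∈ T → ν ∈ T
  succ_mem : ∀ η ∈ T, ∀ b : Bool, η.snoc b ∈ T
  ext_mem : ∀ η ∈ T, ∀ β, η.len ≤ β → β < α → ∃ ρ ∈ T, η.IsInitSeg ρ ∧ ρ.len = β

/-- `T` has true height `α`: every node lies on a cofinal branch through `T`. -/
def TrueHeight (α : Ordinal) (T : Set BSeq) : Prop :=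
  ∀ η ∈ T, ∃ ν : BSeq, ν.len = α ∧ η.IsStrictInitSeg ν ∧ ∀ β < α, ν.restrict β ∈ T

/-- A condition of the forcing `Q`: a tree of true height `α` (a limit ordinal)
omitting at most one limit point at each limit level. -/
structure IsCond (α : Ordinal) (T : Set BSeq) : Prop where
  tree : IsTree α T
  trueHeight : TrueHeight α T
  omits_le_one : ∀ δ < α, Order.IsSuccLimit δ → (limAt T δ \ level T δ).Subsingleton

/-- The end-extension order of `Q`. -/
def QLe (α₁ : Ordinal) (T₁ : Set BSeq) (α₂ : Ordinal) (T₂ : Set BSeq) : Prop :=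
  α₁ ≤ α₂ ∧ T₁ = levelLT T₂ α₁

/-- `f` is a witness for `T` (of height `α`). -/
def IsWitness (α : Ordinal) (T : Set BSeq) (f : BSeq → BSeq) : Prop :=
  ∀ η ∈ T, f η ∈ limAt T α ∧ η.IsStrictInitSeg (f η)

/-- The order of `Q^*`. -/
def QsLe (α₁ : Ordinal) (T₁ : Set BSeq) (f₁ : BSeq → BSeq)
    (α₂ : Ordinal) (T₂ : Set BSeq) (f₂ : BSeq → BSeq) : Prop :=
  QLe α₁ T₁ α₂ T₂ ∧ ∀ η ∈ T₁, (f₁ η).IsInitSeg (f₂ η)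

/-- `C` is a club (closed unbounded) subset of `μ`. -/
def IsClubIn (C : Set Ordinal) (μ : Ordinal) : Prop :=
  C ⊆ Set.Iio μ ∧
  (∀ δ < μ, Order.IsSuccLimit δ → (∀ β < δ, ∃ γ ∈ C, β < γ ∧ γ < δ) → δ ∈ C) ∧
  (∀ β < μ, ∃ γ ∈ C, β < γ ∧ γ < μ)

/-- `S` is stationary in `μ`. -/
def IsStationaryIn (S : Set Ordinal) (μ : Ordinal) : Prop :=
  ∀ C, IsClubIn C μ → (S ∩ C).Nonempty

/-- The set of accumulation points of a set of ordinals. -/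
def accPts (C : Set Ordinal) : Set Ordinal :=
  {β | 0 < β ∧ ∀ γ < β, ∃ δ ∈ C, γ < δ ∧ δ < β}

/-- A condition of the forcing notion `Q`, bundled with its height. -/
structure QCond where
  ht : Ordinal
  tree : Set BSeq
  cond : IsCond ht tree

/-- The order on `Q`. -/
def QCond.Le (p q : QCond) : Prop := QLe p.ht p.tree q.ht q.tree

/-- `D` is an open dense subset of the partial order `P`. -/
def DenseOpenIn (P D : Set QCond) : Prop :=
  D ⊆ P ∧ (∀ p ∈ P, ∃ q ∈ D, p.Le q) ∧
  ∀ p ∈ D, ∀ q ∈ P, p.Le q → q ∈ D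

/-!
Work in `Q*`, pairs of a condition and a witness picking a cofinal branch through each node.
A chain in `Q*` of length `ξ < λ` has an upper bound: the union of its trees, whose true height
is witnessed by the unions of the witness branches; regularity of `λ` keeps its height below `λ`.
A pair `(T, f)` of height `α` can be moved into any open dense `D`: putting the full binary tree
of height `ω` above every branch of `T` at level `α` gives a condition of height `α + ω`
containing every branch `f η`, and any extension of it in `D` carries a witness extending `f`.
Player II answers `D_ξ` by moving an upper bound of his earlier answers into `D_ξ`.
-/

namespace BSeq

lemma ext {η ν : BSeq} (hlen : η.len = ν.len) (hval : ∀ β, η.val β = ν.val β) : η = ν := by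
  cases η; cases ν; cases hlen; simp only [mk.injEq, true_and]; exact funext hval

@[simp] lemma len_restrict (η : BSeq) (β : Ordinal) : (η.restrict β).len = min η.len β := rfl

@[simp] lemma val_restrict (η : BSeq) (β γ : Ordinal) :
    (η.restrict β).val γ = if γ < β then η.val γ else false := rfl

lemma len_restrict_le (η : BSeq) (β : Ordinal) : (η.restrict β).len ≤ β := min_le_right _ _

lemma le_len_of_len_restrict_eq {η : BSeq} {β : Ordinal} (h : (η.restrict β).len = β) :
    β ≤ η.len :=
  min_eq_right_iff.mp h

lemma restrict_of_len_le {η : BSeq} {β : Ordinal} (h : η.len ≤ β) : η.restrict β = η := by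
  refine BSeq.ext (by simpa using h) fun γ => ?_
  by_cases hγ : γ < β
  · simp [hγ]
  · simp [hγ, η.val_eq_false γ (h.trans (not_lt.mp hγ))]

lemma restrict_restrict (η : BSeq) {β γ : Ordinal} (h : β ≤ γ) :
    (η.restrict γ).restrict β = η.restrict β := by
  refine BSeq.ext (by simp [min_assoc, min_eq_right h]) fun δ => ?_
  by_cases hδ : δ < β
  · simp [hδ, hδ.trans_le h]
  · simp [hδ]

lemma isInitSeg_refl (η : BSeq) : η.IsInitSeg η := ⟨le_rfl, fun _ _ => rfl⟩

instance : Std.Refl IsInitSeg := ⟨isInitSeg_refl⟩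

lemma IsInitSeg.trans {η ν ρ : BSeq} (h₁ : η.IsInitSeg ν) (h₂ : ν.IsInitSeg ρ) :
    η.IsInitSeg ρ :=
  ⟨h₁.1.trans h₂.1, fun β hβ => (h₁.2 β hβ).trans (h₂.2 β (hβ.trans_le h₁.1))⟩

lemma IsStrictInitSeg.trans_isInitSeg {η ν ρ : BSeq} (h₁ : η.IsStrictInitSeg ν)
    (h₂ : ν.IsInitSeg ρ) : η.IsStrictInitSeg ρ :=
  ⟨h₁.1.trans h₂, h₁.2.trans_le h₂.1⟩

lemma IsInitSeg.trans_isStrictInitSeg {η ν ρ : BSeq} (h₁ : η.IsInitSeg ν)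
    (h₂ : ν.IsStrictInitSeg ρ) : η.IsStrictInitSeg ρ :=
  ⟨h₁.trans h₂.1, h₁.1.trans_lt h₂.2⟩

lemma IsInitSeg.eq_restrict {ν η : BSeq} (h : ν.IsInitSeg η) : ν = η.restrict ν.len := by
  refine BSeq.ext (by simp [h.1]) fun γ => ?_
  by_cases hγ : γ < ν.len
  · simp [hγ, h.2 γ hγ]
  · simp [hγ, ν.val_eq_false γ (not_lt.mp hγ)]

lemma IsInitSeg.restrict_eq {ν η : BSeq} (h : ν.IsInitSeg η) {β : Ordinal} (hβ : β ≤ ν.len) :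
    ν.restrict β = η.restrict β := by
  rw [h.eq_restrict, restrict_restrict η hβ]

lemma IsInitSeg.isInitSeg_restrict {ν η : BSeq} (h : ν.IsInitSeg η) {β : Ordinal}
    (hβ : ν.len ≤ β) : ν.IsInitSeg (η.restrict β) :=
  ⟨le_min h.1 hβ, fun γ hγ => by simp [hγ.trans_le hβ, h.2 γ hγ]⟩

lemma restrict_snoc (η : BSeq) (b : Bool) {β : Ordinal} (hβ : β ≤ η.len) :
    (η.snoc b).restrict β = η.restrict β := by
  refine BSeq.ext ?_ fun γ => ?_
  · change min (η.len + 1) β = min η.len β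
    rw [min_eq_right (hβ.trans le_self_add), min_eq_right hβ]
  · by_cases hγ : γ < β
    · simp [hγ, snoc, (hγ.trans_le hβ).ne]
    · simp [hγ]

def pad (η : BSeq) (δ : Ordinal) (h : η.len ≤ δ) : BSeq :=
  ⟨δ, η.val, fun β hβ => η.val_eq_false β (h.trans hβ)⟩

lemma isInitSeg_pad (η : BSeq) (δ : Ordinal) (h : η.len ≤ δ) : η.IsInitSeg (η.pad δ h) :=
  ⟨h, fun _ _ => rfl⟩

open Classical in
noncomputable def glue (L : Ordinal) (S : Set BSeq) : BSeq :=
  ⟨L, fun β => decide (β < L ∧ ∃ s ∈ S, s.val β = true), fun β hβ => by simp [not_lt.mpr hβ]⟩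

lemma val_glue_eq_true {L β : Ordinal} (S : Set BSeq) (hβ : β < L) :
    (glue L S).val β = true ↔ ∃ s ∈ S, s.val β = true := by
  simp [glue, hβ]

lemma isInitSeg_glue {L : Ordinal} {S : Set BSeq} (hS : IsChain IsInitSeg S) {s : BSeq}
    (hs : s ∈ S) (hL : s.len ≤ L) : s.IsInitSeg (glue L S) := by
  refine ⟨hL, fun β hβ => ?_⟩
  rw [Bool.eq_iff_iff, val_glue_eq_true S (hβ.trans_le hL)]
  refine ⟨fun h => ⟨s, hs, h⟩, fun ⟨t, ht, htβ⟩ => ?_⟩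
  have hβt : β < t.len := not_le.mp fun h => by simp [t.val_eq_false β h] at htβ
  rcases hS.total hs ht with hst | hts
  · rwa [hst.2 β hβ]
  · rwa [← hts.2 β hβt]

end BSeq

open BSeq

section Trees

variable {α α' α'' δ : Ordinal} {T T' T'' : Set BSeq}

lemma TrueHeight.len_lt (h : TrueHeight α T) {η : BSeq} (hη : η ∈ T) : η.len < α := by
  obtain ⟨ν, hν, hην, -⟩ := h η hη
  exact hν ▸ hην.2

lemma TrueHeight.ext_mem (h : TrueHeight α T) :
    ∀ η ∈ T, ∀ β, η.len ≤ β → β < α → ∃ ρ ∈ T, η.IsInitSeg ρ ∧ ρ.len = β := by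
  intro η hη β hηβ hβ
  obtain ⟨ν, hν, hην, hνT⟩ := h η hη
  exact ⟨ν.restrict β, hνT β hβ, hην.1.isInitSeg_restrict hηβ, by simp [hν, hβ.le]⟩

lemma IsWitness.trueHeight {f : BSeq → BSeq} (h : IsWitness α T f) : TrueHeight α T :=
  fun η hη => ⟨f η, (h η hη).1.1, (h η hη).2, (h η hη).1.2⟩

lemma IsCond.exists_isWitness (h : IsCond α T) : ∃ f, IsWitness α T f := by
  have : Nonempty BSeq := ⟨BSeq.nil⟩
  choose! f hf using h.trueHeight
  exact ⟨f, fun η hη => ⟨⟨(hf η hη).1, (hf η hη).2.2⟩, (hf η hη).2.1⟩⟩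

lemma qLe_refl (h : ∀ η ∈ T, η.len < α) : QLe α T α T :=
  ⟨le_rfl, Set.ext fun η => ⟨fun hη => ⟨hη, h η hη⟩, And.left⟩⟩

lemma QLe.subset (h : QLe α T α' T') : T ⊆ T' := by
  rw [h.2]; exact fun _ hη => hη.1

lemma QLe.mem_of_len_lt (h : QLe α T α' T') {η : BSeq} (hη : η ∈ T') (hlen : η.len < α) :
    η ∈ T := by
  rw [h.2]; exact ⟨hη, hlen⟩

lemma QLe.trans (h : QLe α T α' T') (h' : QLe α' T' α'' T'') : QLe α T α'' T'' :=
  ⟨h.1.trans h'.1, Set.ext fun η => ⟨fun hη => ⟨h'.subset (h.subset hη), by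
    rw [h.2] at hη; exact hη.2⟩, fun hη => h.mem_of_len_lt
      (h'.mem_of_len_lt hη.1 (hη.2.trans_le h.1)) hη.2⟩⟩

lemma QLe.limAt_eq (h : QLe α T α' T') (hδ : δ ≤ α) : limAt T δ = limAt T' δ :=
  Set.ext fun η => ⟨fun hη => ⟨hη.1, fun β hβ => h.subset (hη.2 β hβ)⟩,
    fun hη => ⟨hη.1, fun β hβ => h.mem_of_len_lt (hη.2 β hβ)
      ((len_restrict_le η β).trans_lt (hβ.trans_le hδ))⟩⟩

lemma QLe.level_eq (h : QLe α T α' T') (hδ : δ < α) : level T δ = level T' δ :=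
  Set.ext fun _ => ⟨fun hη => ⟨h.subset hη.1, hη.2⟩,
    fun hη => ⟨h.mem_of_len_lt hη.1 (hη.2 ▸ hδ), hη.2⟩⟩

-- Apart from the true height, every clause of `IsCond` is about nodes of bounded length, where
-- `T` agrees with one of the conditions `T'`.
theorem isCond_of_trueHeight_of_cofinal (hα : α ≠ 0) (hT : TrueHeight α T)
    (hcof : ∀ β < α, ∃ α' T', β < α' ∧ IsCond α' T' ∧ QLe α' T' α T) : IsCond α T := by
  have hloc : ∀ η ∈ T, ∃ α' T', IsCond α' T' ∧ QLe α' T' α T ∧ η ∈ T' := by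
    intro η hη
    obtain ⟨α', T', hlt, hc, hle⟩ := hcof η.len (hT.len_lt hη)
    exact ⟨α', T', hc, hle, hle.mem_of_len_lt hη hlt⟩
  refine ⟨⟨?_, fun η hη => hT.len_lt hη, ?_, ?_, ?_, hT.ext_mem⟩, hT, ?_⟩
  · refine Ordinal.isSuccLimit_iff.2 ⟨hα, Order.isSuccPrelimit_of_succ_lt fun β hβ => ?_⟩
    obtain ⟨α', T', hlt, hc, hle⟩ := hcof β hβ
    exact (hc.tree.limit.succ_lt hlt).trans_le hle.1
  · obtain ⟨α', T', -, hc, hle⟩ := hcof 0 (pos_iff_ne_zero.2 hα)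
    exact hle.subset hc.tree.nil_mem
  · intro ν η hνη hη
    obtain ⟨α', T', hc, hle, hηT'⟩ := hloc η hη
    exact hle.subset (hc.tree.downClosed ν η hνη hηT')
  · intro η hη b
    obtain ⟨α', T', hc, hle, hηT'⟩ := hloc η hη
    exact hle.subset (hc.tree.succ_mem η hηT' b)
  · intro δ hδ hδlim
    obtain ⟨α', T', hlt, hc, hle⟩ := hcof δ hδ
    rw [← hle.limAt_eq hlt.le, ← hle.level_eq hlt]
    exact hc.omits_le_one δ hlt hδlim

end Trees

lemma Order.IsSuccLimit.le_of_lt_add_omega0 {α δ : Ordinal} (hδ : Order.IsSuccLimit δ)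
    (h : δ < α + ω) : δ ≤ α := by
  obtain ⟨d, hd, hδd⟩ := (Ordinal.lt_add_iff omega0_ne_zero).1 h
  obtain ⟨n, rfl⟩ := Ordinal.lt_omega0.1 hd
  induction n with
  | zero => simpa using hδd
  | succ n ih =>
    refine ih (Ordinal.natCast_lt_omega0 n) ?_
    rwa [Nat.cast_succ, ← add_assoc, ← Order.succ_eq_add_one, hδ.le_succ_iff] at hδd

section BranchCompletion

variable {α : Ordinal} {T : Set BSeq}

def branchCompletion (α : Ordinal) (T : Set BSeq) : Set BSeq :=
  T ∪ {η | η.restrict α ∈ limAt T α ∧ η.len < α + ω}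

lemma restrict_mem_branchCompletion {η : BSeq} (hη : η.restrict α ∈ limAt T α) {β : Ordinal}
    (hβ : β < α + ω) : η.restrict β ∈ branchCompletion α T := by
  rcases lt_or_ge β α with hβα | hαβ
  · left
    rw [← restrict_restrict η hβα.le]
    exact hη.2 β hβα
  · right
    exact ⟨by rwa [restrict_restrict η hαβ], (len_restrict_le η β).trans_lt hβ⟩

lemma mem_branchCompletion_of_mem_limAt {b : BSeq} (hb : b ∈ limAt T α) :
    b ∈ branchCompletion α T :=
  Or.inr ⟨by rwa [restrict_of_len_le hb.1.le], hb.1 ▸ lt_add_of_pos_right α omega0_pos⟩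

lemma exists_branch_branchCompletion {x : BSeq} (hx : x.restrict α ∈ limAt T α)
    (hlen : x.len ≤ α + ω) : ∃ ν : BSeq, ν.len = α + ω ∧ x.IsInitSeg ν ∧
      ∀ β < α + ω, ν.restrict β ∈ branchCompletion α T := by
  refine ⟨x.pad _ hlen, rfl, isInitSeg_pad x _ hlen,
    fun β hβ => restrict_mem_branchCompletion ?_ hβ⟩
  rwa [← (isInitSeg_pad x _ hlen).restrict_eq (le_len_of_len_restrict_eq hx.1)]

lemma trueHeight_branchCompletion (h : TrueHeight α T) :
    TrueHeight (α + ω) (branchCompletion α T) := by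
  rintro η (hη | ⟨hη, hlen⟩)
  · obtain ⟨b, hb, hηb, hbT⟩ := h η hη
    obtain ⟨ν, hν, hbν, hνT⟩ := exists_branch_branchCompletion (x := b)
      (by rw [restrict_of_len_le hb.le]; exact ⟨hb, hbT⟩) (hb.trans_le le_self_add)
    exact ⟨ν, hν, hηb.trans_isInitSeg hbν, hνT⟩
  · obtain ⟨ν, hν, hην, hνT⟩ := exists_branch_branchCompletion hη hlen.le
    exact ⟨ν, hν, ⟨hην, hν ▸ hlen⟩, hνT⟩

lemma qLe_branchCompletion (h : IsTree α T) : QLe α T (α + ω) (branchCompletion α T) := by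
  refine ⟨le_self_add, Set.ext fun η => ⟨fun hη => ⟨Or.inl hη, h.len_lt η hη⟩, ?_⟩⟩
  rintro ⟨hη | ⟨hη, -⟩, hlen⟩
  · exact hη
  · exact absurd (le_len_of_len_restrict_eq hη.1) hlen.not_ge

theorem isCond_branchCompletion (h : IsCond α T) :
    IsCond (α + ω) (branchCompletion α T) := by
  have hlim : Order.IsSuccLimit (α + ω) := Ordinal.isSuccLimit_add α Ordinal.isSuccLimit_omega0
  have hth := trueHeight_branchCompletion h.trueHeight
  have hle := qLe_branchCompletion h.tree
  refine ⟨⟨hlim, fun η hη => hth.len_lt hη, Or.inl h.tree.nil_mem, ?_, ?_, hth.ext_mem⟩, hth, ?_⟩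
  · rintro ν η hνη (hη | ⟨hη, hlen⟩)
    · exact Or.inl (h.tree.downClosed ν η hνη hη)
    · rw [hνη.1.eq_restrict]
      exact restrict_mem_branchCompletion hη (hνη.2.trans hlen)
  · rintro η (hη | ⟨hη, hlen⟩) b
    · exact Or.inl (h.tree.succ_mem η hη b)
    · refine Or.inr ⟨by rwa [restrict_snoc η b (le_len_of_len_restrict_eq hη.1)], ?_⟩
      change η.len + 1 < α + ω
      rw [← Order.succ_eq_add_one]
      exact hlim.succ_lt hlen
  · intro δ hδ hδlim
    rcases (hδlim.le_of_lt_add_omega0 hδ).lt_or_eq with hδα | hδα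
    · rw [← hle.limAt_eq hδα.le, ← hle.level_eq hδα]
      exact h.omits_le_one δ hδα hδlim
    · rw [hδα]
      have hsub : limAt (branchCompletion α T) α ⊆ level (branchCompletion α T) α := by
        rw [← hle.limAt_eq le_rfl]
        exact fun b hb => ⟨mem_branchCompletion_of_mem_limAt hb, hb.1⟩
      rw [Set.sdiff_eq_empty.2 hsub]
      exact Set.subsingleton_empty

end BranchCompletion

/-- A condition of `Q` with a witness: `Q*`. -/
structure QStar extends QCond where
  wit : BSeq → BSeq
  isWitness : IsWitness ht tree wit

namespace QStar

instance : Preorder QStar where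
  le P P' := QsLe P.ht P.tree P.wit P'.ht P'.tree P'.wit
  le_refl P := ⟨qLe_refl fun η hη => P.cond.tree.len_lt η hη, fun η _ => isInitSeg_refl _⟩
  le_trans _ _ _ h h' := ⟨h.1.trans h'.1, fun η hη => (h.2 η hη).trans (h'.2 η (h.1.subset hη))⟩

lemma qLe_of_le {P P' : QStar} (h : P ≤ P') : QLe P.ht P.tree P'.ht P'.tree := h.1

lemma isInitSeg_wit_of_le {P P' : QStar} (h : P ≤ P') {η : BSeq} (hη : η ∈ P.tree) :
    (P.wit η).IsInitSeg (P'.wit η) :=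
  h.2 η hη

lemma exists_le_of_qLe (P : QStar) (q : QCond) (hle : QLe P.ht P.tree q.ht q.tree)
    (hwit : ∀ η ∈ P.tree, P.wit η ∈ q.tree) : ∃ P' : QStar, P'.toQCond = q ∧ P ≤ P' := by
  classical
  obtain ⟨f, hf⟩ := q.cond.exists_isWitness
  -- an old node is sent along its old witness branch, so the new witness extends it
  let start : BSeq → BSeq := fun η => if η ∈ P.tree then P.wit η else η
  have hstart : ∀ η ∈ q.tree, start η ∈ q.tree ∧ η.IsInitSeg (start η) := by
    intro η hη
    by_cases hηP : η ∈ P.tree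
    · simpa [start, hηP] using ⟨hwit η hηP, (P.isWitness η hηP).2.1⟩
    · simpa [start, hηP] using ⟨hη, isInitSeg_refl η⟩
  refine ⟨⟨q, f ∘ start, fun η hη => ?_⟩, rfl, hle, fun η hη => ?_⟩
  · obtain ⟨hmem, hinit⟩ := hstart η hη
    exact ⟨(hf _ hmem).1, hinit.trans_isStrictInitSeg (hf _ hmem).2⟩
  · simpa [start, hη] using (hf _ (hwit η hη)).2.1

theorem exists_le_mem_of_denseOpenIn {lam : Cardinal} (hlam : ℵ₀ < lam) (P : QStar)
    (hP : P.ht < lam.ord) {D : Set QCond} (hD : DenseOpenIn {p | p.ht < lam.ord} D) :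
    ∃ P' : QStar, P ≤ P' ∧ P'.toQCond ∈ D := by
  let C : QCond := ⟨P.ht + ω, branchCompletion P.ht P.tree, isCond_branchCompletion P.cond⟩
  have hC : C.ht < lam.ord :=
    Ordinal.isPrincipal_add_ord hlam.le hP (by rwa [Cardinal.lt_ord, Ordinal.card_omega0])
  obtain ⟨q, hqD, hCq⟩ := hD.2.1 C hC
  obtain ⟨P', rfl, hPP'⟩ := P.exists_le_of_qLe q ((qLe_branchCompletion P.cond.tree).trans hCq)
    fun η hη => hCq.subset (mem_branchCompletion_of_mem_limAt (P.isWitness η hη).1)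
  exact ⟨P', hPP', hqD⟩

section Chain

variable {ξ : Ordinal.{0}} {g : Ordinal.{0} → QStar}

noncomputable def chainHt (ξ : Ordinal.{0}) (g : Ordinal.{0} → QStar) : Ordinal.{0} := ⨆ ζ : Set.Iio ξ, (g ζ).ht

def chainTree (ξ : Ordinal.{0}) (g : Ordinal.{0} → QStar) : Set BSeq := ⋃ ζ < ξ, (g ζ).tree

noncomputable def chainWit (ξ : Ordinal.{0}) (g : Ordinal.{0} → QStar) (η : BSeq) : BSeq :=
  glue (chainHt ξ g) {ν | ∃ ζ < ξ, η ∈ (g ζ).tree ∧ (g ζ).wit η = ν}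

lemma ht_le_chainHt {ζ : Ordinal} (hζ : ζ < ξ) : (g ζ).ht ≤ chainHt ξ g :=
  Ordinal.le_iSup (fun ζ : Set.Iio ξ => (g ζ).ht) ⟨ζ, hζ⟩

lemma exists_lt_ht_of_lt_chainHt {β : Ordinal} (hβ : β < chainHt ξ g) :
    ∃ ζ < ξ, β < (g ζ).ht := by
  obtain ⟨⟨ζ, hζ⟩, hβζ⟩ := Ordinal.lt_iSup_iff.1 hβ
  exact ⟨ζ, hζ, hβζ⟩

lemma chainHt_lt_ord {lam : Cardinal} (hlam : lam.IsRegular) (hξ : ξ < lam.ord)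
    (hg : ∀ ζ < ξ, (g ζ).ht < lam.ord) : chainHt ξ g < lam.ord := by
  refine Ordinal.lift_iSup_lt_of_lt_cof ?_ fun ζ => hg ζ ζ.2
  rwa [← Ordinal.lift_cof, hlam.cof_ord, Cardinal.mk_Iio_ordinal, Cardinal.lift_lift,
    Cardinal.lift_lt, ← Cardinal.lt_ord]

variable (hg : MonotoneOn g (Set.Iio ξ))
include hg

lemma qLe_chainTree {ζ : Ordinal} (hζ : ζ < ξ) :
    QLe (g ζ).ht (g ζ).tree (chainHt ξ g) (chainTree ξ g) := by
  refine ⟨ht_le_chainHt hζ, Set.ext fun η => ⟨fun hη => ⟨Set.mem_biUnion hζ hη,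
    (g ζ).cond.tree.len_lt η hη⟩, ?_⟩⟩
  rintro ⟨hη, hlen⟩
  obtain ⟨ζ', hζ', hη⟩ := Set.mem_iUnion₂.1 hη
  rcases le_total ζ' ζ with h | h
  · exact (qLe_of_le (hg hζ' hζ h)).subset hη
  · exact (qLe_of_le (hg hζ hζ' h)).mem_of_len_lt hη hlen

lemma exists_mem_tree_of_mem_chainTree {η : BSeq} (hη : η ∈ chainTree ξ g) {β : Ordinal}
    (hβ : β < chainHt ξ g) : ∃ ζ < ξ, η ∈ (g ζ).tree ∧ β < (g ζ).ht := by
  obtain ⟨ζ₁, hζ₁, hη⟩ := Set.mem_iUnion₂.1 hη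
  obtain ⟨ζ₂, hζ₂, hβ⟩ := exists_lt_ht_of_lt_chainHt hβ
  have hmax : max ζ₁ ζ₂ < ξ := max_lt hζ₁ hζ₂
  exact ⟨max ζ₁ ζ₂, hmax, (qLe_of_le (hg hζ₁ hmax (le_max_left _ _))).subset hη,
    hβ.trans_le (qLe_of_le (hg hζ₂ hmax (le_max_right _ _))).1⟩

lemma isInitSeg_chainWit {ζ : Ordinal} (hζ : ζ < ξ) {η : BSeq} (hη : η ∈ (g ζ).tree) :
    ((g ζ).wit η).IsInitSeg (chainWit ξ g η) := by
  refine isInitSeg_glue ?_ ⟨ζ, hζ, hη, rfl⟩ (((g ζ).isWitness η hη).1.1.trans_le (ht_le_chainHt hζ))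
  rintro _ ⟨ζ₁, hζ₁, hη₁, rfl⟩ _ ⟨ζ₂, hζ₂, hη₂, rfl⟩ -
  rcases le_total ζ₁ ζ₂ with h | h
  · exact Or.inl (isInitSeg_wit_of_le (hg hζ₁ hζ₂ h) hη₁)
  · exact Or.inr (isInitSeg_wit_of_le (hg hζ₂ hζ₁ h) hη₂)

lemma isWitness_chainWit : IsWitness (chainHt ξ g) (chainTree ξ g) (chainWit ξ g) := by
  intro η hη
  refine ⟨⟨rfl, fun β hβ => ?_⟩, ?_⟩
  · obtain ⟨ζ, hζ, hηζ, hβζ⟩ := exists_mem_tree_of_mem_chainTree hg hη hβ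
    have hwit := (g ζ).isWitness η hηζ
    rw [← (isInitSeg_chainWit hg hζ hηζ).restrict_eq (hwit.1.1 ▸ hβζ.le)]
    exact (qLe_chainTree hg hζ).subset (hwit.1.2 β hβζ)
  · obtain ⟨ζ, hζ, hηζ⟩ := Set.mem_iUnion₂.1 hη
    exact ((g ζ).isWitness η hηζ).2.trans_isInitSeg (isInitSeg_chainWit hg hζ hηζ)

theorem isCond_chainTree (hξ : 0 < ξ) : IsCond (chainHt ξ g) (chainTree ξ g) := by
  refine isCond_of_trueHeight_of_cofinal ?_ (isWitness_chainWit hg).trueHeight fun β hβ => ?_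
  · exact ((g 0).cond.tree.limit.pos.trans_le (ht_le_chainHt hξ)).ne'
  · obtain ⟨ζ, hζ, hβζ⟩ := exists_lt_ht_of_lt_chainHt hβ
    exact ⟨_, _, hβζ, (g ζ).cond, qLe_chainTree hg hζ⟩

noncomputable def chainSup (hξ : 0 < ξ) : QStar :=
  ⟨⟨chainHt ξ g, chainTree ξ g, isCond_chainTree hg hξ⟩, chainWit ξ g, isWitness_chainWit hg⟩

lemma le_chainSup (hξ : 0 < ξ) {ζ : Ordinal} (hζ : ζ < ξ) : g ζ ≤ chainSup hg hξ :=
  ⟨qLe_chainTree hg hζ, fun _ hη => isInitSeg_chainWit hg hζ hη⟩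

end Chain

end QStar

section Strategy

open Classical in
/-- Player II's answer to `D` at stage `ξ` after his answers `prev` (`base` if none is legal). -/
noncomputable def reply (base : QStar) (D : Set QCond) (ξ : Ordinal.{0})
    (prev : ∀ ζ < ξ, QStar) : QStar :=
  if h : ∃ P : QStar, P.toQCond ∈ D ∧ base ≤ P ∧ ∀ ζ hζ, prev ζ hζ ≤ P then h.choose else base

noncomputable def strategy (base : QStar) (D : Ordinal.{0} → Set QCond) : Ordinal.{0} → QStar :=
  Ordinal.lt_wf.fix fun ξ => reply base (D ξ) ξ

variable {base : QStar} {D D' : Ordinal.{0} → Set QCond}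

lemma strategy_eq (ξ : Ordinal.{0}) :
    strategy base D ξ = reply base (D ξ) ξ fun ζ _ => strategy base D ζ :=
  Ordinal.lt_wf.fix_eq _ ξ

lemma strategy_congr {ξ : Ordinal.{0}} (h : ∀ ζ ≤ ξ, D ζ = D' ζ) :
    strategy base D ξ = strategy base D' ξ := by
  induction ξ using WellFoundedLT.induction with
  | ind ξ ih =>
    rw [strategy_eq, strategy_eq, h ξ le_rfl]
    congr 1
    funext ζ hζ
    exact ih ζ hζ fun ζ' hζ' => h ζ' (hζ'.trans hζ.le)

lemma reply_spec {D : Set QCond} {ξ : Ordinal.{0}} {prev : ∀ ζ < ξ, QStar}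
    (h : ∃ P : QStar, P.toQCond ∈ D ∧ base ≤ P ∧ ∀ ζ hζ, prev ζ hζ ≤ P) :
    (reply base D ξ prev).toQCond ∈ D ∧ base ≤ reply base D ξ prev ∧
      ∀ ζ hζ, prev ζ hζ ≤ reply base D ξ prev := by
  rw [reply, dif_pos h]
  exact h.choose_spec

theorem strategy_spec {lam : Cardinal.{0}} (hreg : lam.IsRegular) (hunc : ℵ₀ < lam)
    {γ : Ordinal.{0}} (hγ : γ < lam.ord) (hbase : base.ht < lam.ord)
    (hD : ∀ ξ < γ, DenseOpenIn {p | p.ht < lam.ord} (D ξ)) (ξ : Ordinal.{0}) (hξ : ξ < γ) :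
    (strategy base D ξ).toQCond ∈ D ξ ∧ base ≤ strategy base D ξ ∧
      ∀ ζ < ξ, strategy base D ζ ≤ strategy base D ξ := by
  induction ξ using WellFoundedLT.induction with
  | ind ξ ih =>
    have hprev : ∀ ζ < ξ, base ≤ strategy base D ζ ∧ (strategy base D ζ).ht < lam.ord :=
      fun ζ hζ => ⟨(ih ζ hζ (hζ.trans hξ)).2.1, (hD ζ (hζ.trans hξ)).1 (ih ζ hζ (hζ.trans hξ)).1⟩
    obtain ⟨U, hU, hbU, hgU⟩ : ∃ U : QStar, U.ht < lam.ord ∧ base ≤ U ∧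
        ∀ ζ < ξ, strategy base D ζ ≤ U := by
      rcases eq_zero_or_pos ξ with rfl | hξ0
      · exact ⟨base, hbase, le_rfl, fun ζ hζ => absurd hζ (zero_le (a := ζ)).not_gt⟩
      have hmono : MonotoneOn (strategy base D) (Set.Iio ξ) := fun ζ₁ hζ₁ ζ₂ hζ₂ h =>
        h.eq_or_lt.elim (fun h => h ▸ le_rfl) fun h => (ih ζ₂ hζ₂ (hζ₂.trans hξ)).2.2 ζ₁ h
      exact ⟨QStar.chainSup hmono hξ0, QStar.chainHt_lt_ord hreg ((hξ.trans hγ))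
          fun ζ hζ => (hprev ζ hζ).2,
        (hprev 0 hξ0).1.trans (QStar.le_chainSup hmono hξ0 hξ0),
        fun ζ hζ => QStar.le_chainSup hmono hξ0 hζ⟩
    obtain ⟨P, hUP, hPD⟩ := QStar.exists_le_mem_of_denseOpenIn hunc U hU (hD ξ hξ)
    rw [strategy_eq]
    exact reply_spec ⟨P, hPD, hbU.trans hUP, fun ζ hζ => (hgU ζ hζ).trans hUP⟩

end Strategy

theorem stmt8 (lam : Cardinal) (hlam : lam.IsInaccessible)
    (γ : Ordinal) (hγ : γ < lam.ord)
    (Tc : QCond) (hTc : Tc.ht < lam.ord) :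
    ∃ σ : (Ordinal → Set QCond) → Ordinal → QCond,
      (∀ D D' : Ordinal → Set QCond, ∀ ξ < γ, (∀ ζ ≤ ξ, D ζ = D' ζ) → σ D ξ = σ D' ξ) ∧
      ∀ D : Ordinal → Set QCond,
        (∀ ξ < γ, DenseOpenIn {p : QCond | p.ht < lam.ord} (D ξ)) →
        ∀ ξ < γ, σ D ξ ∈ D ξ ∧ (σ D ξ).ht < lam.ord ∧ Tc.Le (σ D ξ) ∧
          ∀ ζ < ξ, (σ D ζ).Le (σ D ξ) := by
  obtain ⟨f, hf⟩ := Tc.cond.exists_isWitness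
  let base : QStar := ⟨Tc, f, hf⟩
  refine ⟨fun D ξ => (strategy base D ξ).toQCond,
    fun D D' ξ _ h => congrArg QStar.toQCond (strategy_congr h), fun D hD ξ hξ => ?_⟩
  obtain ⟨hmem, hbase, hprev⟩ :=
    strategy_spec (base := base) hlam.isRegular hlam.aleph0_lt hγ hTc hD ξ hξ
  exact ⟨hmem, (hD ξ hξ).1 hmem, QStar.qLe_of_le hbase,
    fun ζ hζ => QStar.qLe_of_le (hprev ζ hζ)⟩
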